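/- arXiv:2505.15949 — 2 statements merged into one kernel-verified Lean document; each statement's English description precedes it below -/
import Mathlib

section
/- Let 𝒞 be a 2-CNF formula with m ≥ 1 clauses and n variables, and let G_𝒞 be the graph constructed from 𝒞 as follows: vertices are the 2n literals x_i, x̄_i, the m clause-vertices c_j, the 2mn padding vertices d_{i_1},...,d_{i_{2m}} for each i, and one extra vertex d; edges join x_i to x̄_i, both x_i and x̄_i to each d_{i_j}, x_1 and x̄_1 to d, each clause vertex c_j to its two literals and to d. Then every minimum dominating set of G_𝒞 contains, for each i ∈ {1,...,n}, at least one of the vertices x_i and x̄_i. -/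
/-- Vertices of the graph `G_𝒞`: literal vertices `(i, b)` (where `b = true`
means `xᵢ` and `b = false` means `x̄ᵢ`), clause vertices, padding vertices
`d_{i_j}` (`2m` of them for each variable `i`), and the extra vertex `d`. -/
abbrev CnfVtx (n m : ℕ) := (Fin n × Bool) ⊕ Fin m ⊕ (Fin n × Fin (2 * m)) ⊕ Unit

/-- The base (asymmetric) edge relation of `G_𝒞`: `xᵢ ~ x̄ᵢ`; both `xᵢ, x̄ᵢ ~ d_{i_j}`;
`x₁, x̄₁ ~ d`; each clause vertex `c_j` is joined to its two literals and to `d`. -/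
def cnfRel (n m : ℕ) (c : Fin m → (Fin n × Bool) × (Fin n × Bool)) :
    CnfVtx n m → CnfVtx n m → Prop := fun u v =>
  (∃ i b, u = Sum.inl (i, b) ∧ v = Sum.inl (i, !b)) ∨
  (∃ i b j, u = Sum.inl (i, b) ∧ v = Sum.inr (Sum.inr (Sum.inl (i, j)))) ∨
  (∃ (i : Fin n) (b : Bool), (i : ℕ) = 0 ∧ u = Sum.inl (i, b) ∧ v = Sum.inr (Sum.inr (Sum.inr ()))) ∨
  (∃ j, v = Sum.inr (Sum.inl j) ∧ (u = Sum.inl (c j).1 ∨ u = Sum.inl (c j).2)) ∨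
  (∃ j, u = Sum.inr (Sum.inl j) ∧ v = Sum.inr (Sum.inr (Sum.inr ())))

/-- The graph `G_𝒞` associated to a 2-CNF `𝒞` with clauses `c`. -/
def cnfGraph (n m : ℕ) (c : Fin m → (Fin n × Bool) × (Fin n × Bool)) :
    SimpleGraph (CnfVtx n m) :=
  SimpleGraph.fromRel (cnfRel n m c)

/-- `D` is a dominating set of `G`. -/
def IsDomSet {V : Type*} (G : SimpleGraph V) (D : Finset V) : Prop :=
  ∀ v : V, v ∈ D ∨ ∃ u ∈ D, G.Adj u v

lemma pad_nbr {n m : ℕ} {c : Fin m → (Fin n × Bool) × (Fin n × Bool)}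
    {i : Fin n} {j : Fin (2*m)} {u : CnfVtx n m}
    (h : (cnfGraph n m c).Adj u (Sum.inr (Sum.inr (Sum.inl (i, j))))) :
    ∃ b, u = Sum.inl (i, b) := by
  rw [cnfGraph, SimpleGraph.fromRel_adj] at h
  obtain ⟨hne, h | h⟩ := h <;>
  · rcases h with ⟨i', b, h1, h2⟩ | ⟨i', b, j', h1, h2⟩ | ⟨i', b, h0, h1, h2⟩ |
      ⟨j', h1, h2⟩ | ⟨j', h1, h2⟩ <;> simp_all

lemma adj_xi_pad {n m : ℕ} {c : Fin m → (Fin n × Bool) × (Fin n × Bool)}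
    (i : Fin n) (j : Fin (2*m)) :
    (cnfGraph n m c).Adj (Sum.inl (i, true)) (Sum.inr (Sum.inr (Sum.inl (i, j)))) := by
  rw [cnfGraph, SimpleGraph.fromRel_adj]
  exact ⟨by simp, Or.inl (Or.inr (Or.inl ⟨i, true, j, rfl, rfl⟩))⟩

lemma adj_xi_xbar {n m : ℕ} {c : Fin m → (Fin n × Bool) × (Fin n × Bool)} (i : Fin n) :
    (cnfGraph n m c).Adj (Sum.inl (i, true)) (Sum.inl (i, false)) := by
  rw [cnfGraph, SimpleGraph.fromRel_adj]
  exact ⟨by simp, Or.inl (Or.inl ⟨i, true, rfl, rfl⟩)⟩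

theorem stmt_6 (n m : ℕ) (hn : 0 < n) (hm : 0 < m)
    (c : Fin m → (Fin n × Bool) × (Fin n × Bool))
    (D : Finset (CnfVtx n m)) (hdom : IsDomSet (cnfGraph n m c) D)
    (hmin : ∀ D' : Finset (CnfVtx n m), IsDomSet (cnfGraph n m c) D' → D.card ≤ D'.card) :
    ∀ i : Fin n, Sum.inl (i, true) ∈ D ∨ Sum.inl (i, false) ∈ D := by
  intro i
  by_contra h
  push_neg at h
  obtain ⟨h1, h2⟩ := h
  set xi : CnfVtx n m := Sum.inl (i, true) with hxi
  have hpadD : ∀ j : Fin (2*m), (Sum.inr (Sum.inr (Sum.inl (i, j))) : CnfVtx n m) ∈ D := by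
    intro j
    rcases hdom (Sum.inr (Sum.inr (Sum.inl (i, j)))) with h | ⟨u, hu, hadj⟩
    · exact h
    · obtain ⟨b, rfl⟩ := pad_nbr hadj
      cases b
      · exact absurd hu h2
      · exact absurd hu h1
  set Dpad : Finset (CnfVtx n m) :=
    Finset.univ.image (fun j : Fin (2*m) => Sum.inr (Sum.inr (Sum.inl (i, j)))) with hDpad
  have hsub : Dpad ⊆ D := by
    intro v hv
    simp only [hDpad, Finset.mem_image, Finset.mem_univ, true_and] at hv
    obtain ⟨j, rfl⟩ := hv
    exact hpadD j
  have hcardpad : Dpad.card = 2 * m := by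
    rw [hDpad, Finset.card_image_of_injective _ (by intro a b hab; simpa using hab)]
    simp
  set D' : Finset (CnfVtx n m) := insert xi (D \ Dpad) with hD'
  have hdom' : IsDomSet (cnfGraph n m c) D' := by
    intro v
    rcases hdom v with hv | ⟨u, huD, hadj⟩
    · by_cases hvp : v ∈ Dpad
      · simp only [hDpad, Finset.mem_image, Finset.mem_univ, true_and] at hvp
        obtain ⟨j, rfl⟩ := hvp
        exact Or.inr ⟨xi, Finset.mem_insert_self _ _, adj_xi_pad i j⟩
      · exact Or.inl (Finset.mem_insert_of_mem (Finset.mem_sdiff.mpr ⟨hv, hvp⟩))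
    · by_cases hup : u ∈ Dpad
      · simp only [hDpad, Finset.mem_image, Finset.mem_univ, true_and] at hup
        obtain ⟨j, rfl⟩ := hup
        obtain ⟨b, rfl⟩ := pad_nbr hadj.symm
        cases b
        · exact Or.inr ⟨xi, Finset.mem_insert_self _ _, adj_xi_xbar i⟩
        · exact Or.inl (Finset.mem_insert_self _ _)
      · exact Or.inr ⟨u, Finset.mem_insert_of_mem (Finset.mem_sdiff.mpr ⟨huD, hup⟩), hadj⟩
  have hle := hmin D' hdom'
  have h1' : D'.card ≤ (D \ Dpad).card + 1 := Finset.card_insert_le _ _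
  rw [Finset.card_sdiff_of_subset hsub] at h1'
  have h2' : Dpad.card ≤ D.card := Finset.card_le_card hsub
  omega
end

section
/- Let 𝒞 be a 2-CNF formula with m ≥ 1 clauses and n variables, and let G_𝒞 be the graph constructed from 𝒞 as in the paper (literal vertices, clause vertices adjacent to their two literals and to an extra vertex d, and 2m private padding neighbors for each variable pair). Then the domination number of G_𝒞 is either n or n + 1, and it equals n if and only if 𝒞 is satisfiable. -/
/-- The domination number of a graph on a finite vertex type. -/
noncomputable def domNum {V : Type*} (G : SimpleGraph V) : ℕ :=
  sInf {k | ∃ D : Finset V, IsDomSet G D ∧ D.card = k}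

/-- The 2-CNF with clauses `c` is satisfiable: some truth assignment `a` makes
at least one literal of every clause true (literal `(i, b)` is true iff `a i = b`). -/
def CnfSatisfiable (n m : ℕ) (c : Fin m → (Fin n × Bool) × (Fin n × Bool)) : Prop :=
  ∃ a : Fin n → Bool, ∀ j : Fin m, a (c j).1.1 = (c j).1.2 ∨ a (c j).2.1 = (c j).2.2


namespace Stmt7
variable {n m : ℕ}

abbrev lit (i : Fin n) (b : Bool) : CnfVtx n m := Sum.inl (i, b)
abbrev cls {n m : ℕ} (j : Fin m) : CnfVtx n m := Sum.inr (Sum.inl j)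
abbrev pad (i : Fin n) (j : Fin (2*m)) : CnfVtx n m := Sum.inr (Sum.inr (Sum.inl (i, j)))
abbrev dv {n m : ℕ} : CnfVtx n m := Sum.inr (Sum.inr (Sum.inr ()))

def varIdx : CnfVtx n m → Option (Fin n)
  | Sum.inl (i, _) => some i
  | Sum.inr (Sum.inr (Sum.inl (i, _))) => some i
  | _ => none

variable {c : Fin m → (Fin n × Bool) × (Fin n × Bool)}

lemma adj_lit_lit (i : Fin n) (b : Bool) :
    (cnfGraph n m c).Adj (lit i b) (lit i (!b)) := by
  rw [cnfGraph, SimpleGraph.fromRel_adj]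
  exact ⟨by simp, Or.inl (Or.inl ⟨i, b, rfl, rfl⟩)⟩

lemma adj_lit_pad (i : Fin n) (b : Bool) (j : Fin (2*m)) :
    (cnfGraph n m c).Adj (lit i b) (pad i j) := by
  rw [cnfGraph, SimpleGraph.fromRel_adj]
  exact ⟨by simp, Or.inl (Or.inr (Or.inl ⟨i, b, j, rfl, rfl⟩))⟩

lemma adj_lit0_dv (i : Fin n) (hi : (i : ℕ) = 0) (b : Bool) :
    (cnfGraph n m c).Adj (lit i b) dv := by
  rw [cnfGraph, SimpleGraph.fromRel_adj]
  exact ⟨by simp, Or.inl (Or.inr (Or.inr (Or.inl ⟨i, b, hi, rfl, rfl⟩)))⟩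

lemma adj_dv_cls (j : Fin m) :
    (cnfGraph n m c).Adj dv (cls j) := by
  rw [cnfGraph, SimpleGraph.fromRel_adj]
  exact ⟨by simp, Or.inr (Or.inr (Or.inr (Or.inr (Or.inr ⟨j, rfl, rfl⟩))))⟩

lemma adj_fst_cls (j : Fin m) :
    (cnfGraph n m c).Adj (Sum.inl (c j).1) (cls j) := by
  rw [cnfGraph, SimpleGraph.fromRel_adj]
  exact ⟨by simp, Or.inl (Or.inr (Or.inr (Or.inr (Or.inl ⟨j, rfl, Or.inl rfl⟩))))⟩

lemma adj_snd_cls (j : Fin m) :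
    (cnfGraph n m c).Adj (Sum.inl (c j).2) (cls j) := by
  rw [cnfGraph, SimpleGraph.fromRel_adj]
  exact ⟨by simp, Or.inl (Or.inr (Or.inr (Or.inr (Or.inl ⟨j, rfl, Or.inr rfl⟩))))⟩

lemma pad_adj_inv {u : CnfVtx n m} {i : Fin n} {j : Fin (2*m)}
    (h : (cnfGraph n m c).Adj u (pad i j)) : u = lit i false ∨ u = lit i true := by
  simp [cnfGraph, cnfRel] at h; tauto

lemma cls_adj_inv {u : CnfVtx n m} {j : Fin m}
    (h : (cnfGraph n m c).Adj u (cls j)) :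
    u = Sum.inl (c j).1 ∨ u = Sum.inl (c j).2 ∨ u = dv := by
  simp [cnfGraph, cnfRel] at h; tauto

lemma exists_rep (hm : 0 < m) {D : Finset (CnfVtx n m)}
    (hD : IsDomSet (cnfGraph n m c) D) (i : Fin n) :
    ∃ v ∈ D, varIdx v = some i := by
  have hj : (0 : ℕ) < 2 * m := by omega
  rcases hD (pad i ⟨0, hj⟩) with h | ⟨u, hu, hadj⟩
  · exact ⟨_, h, rfl⟩
  · rcases pad_adj_inv hadj with h | h <;> exact ⟨u, hu, by rw [h]; rfl⟩

lemma lower_bound (hm : 0 < m) {D : Finset (CnfVtx n m)}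
    (hD : IsDomSet (cnfGraph n m c) D) : n ≤ D.card := by
  choose g hgD hgv using exists_rep (c := c) hm hD
  have hinj : Function.Injective g := by
    intro i i' h
    have h1 := hgv i
    rw [h, hgv i'] at h1
    exact (Option.some_injective _ h1).symm
  calc n = (Finset.univ.image g).card := by
        rw [Finset.card_image_of_injective _ hinj, Finset.card_univ, Fintype.card_fin]
    _ ≤ D.card := Finset.card_le_card (fun v hv => by
        obtain ⟨i, -, rfl⟩ := Finset.mem_image.mp hv; exact hgD i)

end Stmt7

open Stmt7 in
theorem stmt_7 (n m : ℕ) (hn : 0 < n) (hm : 0 < m)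
    (c : Fin m → (Fin n × Bool) × (Fin n × Bool)) :
    (domNum (cnfGraph n m c) = n ∨ domNum (cnfGraph n m c) = n + 1) ∧
      (domNum (cnfGraph n m c) = n ↔ CnfSatisfiable n m c) := by
  classical
  set S : Set ℕ := {k | ∃ D : Finset (CnfVtx n m), IsDomSet (cnfGraph n m c) D ∧ D.card = k}
    with hS
  have hSne : S.Nonempty :=
    ⟨(Finset.univ : Finset (CnfVtx n m)).card, Finset.univ,
      fun v => Or.inl (Finset.mem_univ v), rfl⟩
  have hdom : domNum (cnfGraph n m c) = sInf S := rfl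
  have hlow : n ≤ domNum (cnfGraph n m c) := by
    obtain ⟨D, hD, hcard⟩ := Nat.sInf_mem hSne
    rw [hdom, ← hcard]
    exact lower_bound hm hD
  have hub : domNum (cnfGraph n m c) ≤ n + 1 := by
    rw [hdom]
    apply Nat.sInf_le
    refine ⟨(Finset.univ.image (fun i : Fin n => lit i true)) ∪ {dv}, ?_, ?_⟩
    · intro v
      rcases v with ⟨i, b⟩ | j | ⟨i, j⟩ | u
      · cases b
        · exact Or.inr ⟨lit i true, by simp, adj_lit_lit i true⟩
        · exact Or.inl (by simp)
      · exact Or.inr ⟨dv, by simp, adj_dv_cls j⟩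
      · exact Or.inr ⟨lit i true, by simp, adj_lit_pad i true j⟩
      · exact Or.inl (by simp)
    · rw [Finset.card_union_of_disjoint (by simp), Finset.card_image_of_injective,
        Finset.card_univ, Fintype.card_fin, Finset.card_singleton]
      intro i i' h
      simpa using h
  have hsat_le : CnfSatisfiable n m c → domNum (cnfGraph n m c) ≤ n := by
    rintro ⟨a, ha⟩
    rw [hdom]
    apply Nat.sInf_le
    refine ⟨Finset.univ.image (fun i : Fin n => lit i (a i)), ?_, ?_⟩
    · intro v
      rcases v with ⟨i, b⟩ | j | ⟨i, j⟩ | u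
      · by_cases hb : b = a i
        · exact Or.inl (by simp [hb])
        · refine Or.inr ⟨lit i (a i), by simp, ?_⟩
          have hbb : b = !(a i) := by cases b <;> cases hab : a i <;> simp_all
          subst hbb
          exact adj_lit_lit i (a i)
      · refine Or.inr ?_
        rcases ha j with h | h
        · refine ⟨lit (c j).1.1 (a (c j).1.1), by simp, ?_⟩
          rw [h]
          exact adj_fst_cls j
        · refine ⟨lit (c j).2.1 (a (c j).2.1), by simp, ?_⟩
          rw [h]
          exact adj_snd_cls j
      · exact Or.inr ⟨lit i (a i), by simp, adj_lit_pad i (a i) j⟩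
      · exact Or.inr ⟨lit (⟨0, hn⟩ : Fin n) (a ⟨0, hn⟩), by simp, adj_lit0_dv _ rfl _⟩
    · rw [Finset.card_image_of_injective, Finset.card_univ, Fintype.card_fin]
      intro i i' h
      have h2 : i = i' ∧ a i = a i' := by simpa using h
      exact h2.1
  have hsat_of : domNum (cnfGraph n m c) = n → CnfSatisfiable n m c := by
    intro hdn
    obtain ⟨D, hD, hcard⟩ := Nat.sInf_mem hSne
    rw [← hdom, hdn] at hcard
    choose g hgD hgv using exists_rep (c := c) hm hD
    have hinj : Function.Injective g := by
      intro i i' h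
      have h1 := hgv i
      rw [h, hgv i'] at h1
      exact (Option.some_injective _ h1).symm
    have himg : Finset.univ.image g = D := by
      apply Finset.eq_of_subset_of_card_le
      · intro v hv
        obtain ⟨i, -, rfl⟩ := Finset.mem_image.mp hv
        exact hgD i
      · rw [Finset.card_image_of_injective _ hinj, Finset.card_univ, Fintype.card_fin, hcard]
    have hchar : ∀ v ∈ D, ∀ i : Fin n, varIdx v = some i → v = g i := by
      intro v hv i hvi
      rw [← himg] at hv
      obtain ⟨i', -, rfl⟩ := Finset.mem_image.mp hv
      obtain rfl : i' = i := by
        have := (hgv i').symm.trans hvi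
        simpa using this
      rfl
    have hnotD : ∀ v ∈ D, varIdx v ≠ none := by
      intro v hv hnone
      rw [← himg] at hv
      obtain ⟨i, -, rfl⟩ := Finset.mem_image.mp hv
      rw [hgv i] at hnone
      simp at hnone
    have hlit : ∀ i : Fin n, ∃ b, g i = lit i b := by
      intro i
      have hv := hgv i
      rcases hgi : g i with ⟨i', b⟩ | j | ⟨i', j⟩ | u
      · rw [hgi] at hv
        simp [varIdx] at hv
        subst hv
        exact ⟨b, rfl⟩
      · rw [hgi] at hv; simp [varIdx] at hv
      · rw [hgi] at hv
        simp [varIdx] at hv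
        subst hv
        exfalso
        obtain ⟨j', hj'⟩ : ∃ j' : Fin (2*m), j' ≠ j := by
          rcases eq_or_ne j ⟨0, by omega⟩ with h | h
          · exact ⟨⟨1, by omega⟩, by rw [h]; simp [Fin.ext_iff]⟩
          · exact ⟨⟨0, by omega⟩, Ne.symm h⟩
        rcases hD (pad i' j') with hmem | ⟨u, hu, hadj⟩
        · have hc := hchar _ hmem i' rfl
          rw [hgi] at hc
          simp at hc
          exact hj' hc
        · rcases pad_adj_inv hadj with h | h <;>
          · subst h
            have hc := hchar _ hu i' rfl
            rw [hgi] at hc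
            simp at hc
      · rw [hgi] at hv; simp [varIdx] at hv
    choose a hab using hlit
    refine ⟨a, fun j => ?_⟩
    rcases hD (cls j) with hmem | ⟨u, hu, hadj⟩
    · exact absurd rfl (hnotD _ hmem)
    · rcases cls_adj_inv hadj with h | h | h
      · left
        subst h
        have hc := hchar _ hu (c j).1.1 rfl
        rw [hab] at hc
        simp [lit, Prod.ext_iff] at hc
        exact hc.symm
      · right
        subst h
        have hc := hchar _ hu (c j).2.1 rfl
        rw [hab] at hc
        simp [lit, Prod.ext_iff] at hc
        exact hc.symm
      · subst h
        exact absurd rfl (hnotD _ hu)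
  exact ⟨by omega, ⟨hsat_of, fun hs => le_antisymm (hsat_le hs) hlow⟩⟩
end
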